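/- The hexagonal lattice circle packing in the plane has density π/√12: for the lattice L = {2a·(1,0) + 2b·(1/2, √3/2) : a, b ∈ ℤ}, the ratio of the area covered by unit disks centered at points of L ∩ B(0,r) to the area of B(0,r) tends to π/√12 as r → ∞. -/

import Mathlib

open Real Metric MeasureTheory Filter

/-- The hexagonal lattice `{2a·(1,0) + 2b·(1/2, √3/2) : a, b ∈ ℤ}` in the plane. -/
def HexLattice : Set (EuclideanSpace ℝ (Fin 2)) :=
  {v | ∃ a b : ℤ,
    v = fun i => 2 * (a : ℝ) * ![(1 : ℝ), 0] i + 2 * (b : ℝ) * ![(1 / 2 : ℝ), Real.sqrt 3 / 2] i}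

/-!
If the nonzero vectors of a lattice `L` have length at least `2ρ`, the balls of radius `ρ` around
lattice points are pairwise disjoint, so they cover volume `#(L ∩ B(0,r)) · vol B(0,ρ)`. Lattice
point counting gives `#(L ∩ B(0,r)) ~ vol B(0,r) / covol L`, so the density tends to
`vol B(0,ρ) / covol L`. The hexagonal lattice has basis `(2,0), (1,√3)`, hence `ρ = 1` and
`covol L = 2√3 = √12`.
-/

open Module Submodule
open scoped Topology

theorem MeasureTheory.Measure.measure_biUnion_ball_eq_ncard_mul {E : Type*}
    [NormedAddCommGroup E] [MeasurableSpace E] [BorelSpace E] (μ : Measure E)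
    [μ.IsAddHaarMeasure] {s : Set E} (hs : s.Finite) {ρ : ℝ}
    (hsep : s.Pairwise fun v w => 2 * ρ ≤ dist v w) :
    μ (⋃ v ∈ s, ball v ρ) = s.ncard * μ (ball 0 ρ) := by
  lift s to Finset E using hs
  rw [Finset.set_biUnion_coe, measure_biUnion_finset
    (fun v hv w hw hvw => ball_disjoint_ball (by linarith [hsep hv hw hvw]))
    (fun _ _ => measurableSet_ball)]
  simp only [Measure.addHaar_ball_center μ, Finset.sum_const, nsmul_eq_mul, Set.ncard_coe_finset]

namespace ZLattice

theorem finite_inter_closedBall {E : Type*} [NormedAddCommGroup E] [NormedSpace ℝ E]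
    [FiniteDimensional ℝ E] (L : Submodule ℤ E) [DiscreteTopology L] (r : ℝ) :
    ((L : Set E) ∩ closedBall 0 r).Finite := by
  rw [Set.inter_comm]
  exact Metric.finite_isBounded_inter_isClosed DiscreteTopology.isDiscrete isBounded_closedBall
    (AddSubgroup.isClosed_of_discrete (H := L.toAddSubgroup))

theorem covolume_span_eq_abs_det {E ι : Type*} [NormedAddCommGroup E]
    [InnerProductSpace ℝ E] [FiniteDimensional ℝ E] [MeasurableSpace E] [BorelSpace E]
    [Fintype ι] [DecidableEq ι] (b : Basis ι ℝ E) (b₀ : OrthonormalBasis ι ℝ E) :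
    covolume (span ℤ (Set.range b)) = |b₀.toBasis.det b| := by
  rw [covolume_eq_measure_fundamentalDomain _ _ (ZSpan.isAddFundamentalDomain b volume),
    ZSpan.measureReal_fundamentalDomain b volume b₀.toBasis,
    measureReal_congr (ZSpan.fundamentalDomain_ae_parallelepiped _ volume),
    OrthonormalBasis.coe_toBasis, measureReal_def, b₀.volume_parallelepiped, ENNReal.toReal_one,
    mul_one]

section Counting

variable {E : Type*} [NormedAddCommGroup E] [InnerProductSpace ℝ E] [FiniteDimensional ℝ E]
  [MeasurableSpace E] [BorelSpace E] [Nontrivial E]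
  (L : Submodule ℤ E) [DiscreteTopology L] [IsZLattice ℝ L]

/- Mathlib counts lattice points in the sublevel sets of a homogeneous function; `‖x‖ ^ n`,
with `n` the dimension, has the closed balls as sublevel sets. -/
theorem tendsto_ncard_inter_closedBall_div_pow :
    Tendsto (fun r : ℝ => (((L : Set E) ∩ closedBall 0 r).ncard : ℝ) / r ^ finrank ℝ E) atTop
      (𝓝 (volume.real (closedBall (0 : E) 1) / covolume L)) := by
  set n := finrank ℝ E
  have hn : n ≠ 0 := finrank_pos.ne'
  have hball {c : ℝ} (hc : 0 ≤ c) :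
      {x : E | x ∈ Set.univ ∧ ‖x‖ ^ n ≤ c ^ n} = closedBall 0 c := by
    ext x
    simp [pow_le_pow_iff_left₀ (norm_nonneg x) hc hn]
  have hunit := hball zero_le_one
  rw [one_pow] at hunit
  have hcount := covolume.tendsto_card_le_div' L (X := Set.univ) (F := fun x => ‖x‖ ^ n)
    (fun _ _ _ _ => trivial) (fun x r hr => by rw [norm_smul, mul_pow, Real.norm_of_nonneg hr])
    (by rw [hunit]; exact isBounded_closedBall) (by rw [hunit]; exact measurableSet_closedBall)
    (by rw [hunit, frontier_closedBall _ one_ne_zero]; exact Measure.addHaar_sphere _ _ _)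
  rw [hunit] at hcount
  refine (hcount.comp (tendsto_pow_atTop hn)).congr' ?_
  filter_upwards [eventually_ge_atTop 0] with r hr
  rw [Function.comp_apply, hball hr, Set.inter_comm, Nat.card_coe_set_eq]

theorem tendsto_packing_density {ρ : ℝ} (hL : ∀ v ∈ L, v ≠ 0 → 2 * ρ ≤ ‖v‖) :
    Tendsto (fun r : ℝ => volume (⋃ v ∈ (L : Set E) ∩ closedBall 0 r, ball v ρ) /
        volume (closedBall (0 : E) r)) atTop
      (𝓝 (ENNReal.ofReal (volume.real (ball (0 : E) ρ) / covolume L))) := by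
  have hsep (r : ℝ) : ((L : Set E) ∩ closedBall 0 r).Pairwise fun v w => 2 * ρ ≤ dist v w :=
    fun v hv w hw hvw => by
      simpa only [dist_eq_norm] using hL _ (sub_mem hv.1 hw.1) (sub_ne_zero.mpr hvw)
  have hunit : volume.real (closedBall (0 : E) 1) ≠ 0 :=
    (measureReal_ne_zero_iff measure_closedBall_lt_top.ne).mpr
      (measure_closedBall_pos volume 0 one_pos).ne'
  have hlim := (tendsto_ncard_inter_closedBall_div_pow L).mul_const
    (volume.real (ball (0 : E) ρ) / volume.real (closedBall (0 : E) 1))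
  rw [div_mul_div_comm, mul_comm (volume.real _), mul_div_mul_right _ _ hunit] at hlim
  refine (ENNReal.tendsto_ofReal hlim).congr' ?_
  filter_upwards [eventually_gt_atTop 0] with r hr
  rw [Measure.measure_biUnion_ball_eq_ncard_mul _ (finite_inter_closedBall L r) (hsep r),
    Measure.addHaar_closedBall' _ _ hr.le, ← ofReal_measureReal measure_ball_lt_top.ne,
    ← ofReal_measureReal measure_closedBall_lt_top.ne,
    ← ENNReal.ofReal_natCast, ← ENNReal.ofReal_mul (by positivity),
    ← ENNReal.ofReal_mul (by positivity), ← ENNReal.ofReal_div_of_pos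
      (mul_pos (by positivity) (lt_of_le_of_ne measureReal_nonneg hunit.symm))]
  congr 1
  field_simp

end Counting

end ZLattice

theorem Int.one_le_sq_add_mul_add_sq {a c : ℤ} (h : a ≠ 0 ∨ c ≠ 0) :
    1 ≤ a ^ 2 + a * c + c ^ 2 := by
  rcases h with h | h
  · nlinarith [sq_pos_of_ne_zero h, sq_nonneg (a + 2 * c)]
  · nlinarith [sq_pos_of_ne_zero h, sq_nonneg (2 * a + c)]

namespace HexLattice

noncomputable def basisVec : Fin 2 → EuclideanSpace ℝ (Fin 2) := ![!₂[2, 0], !₂[1, √3]]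

theorem det_basisVec : (EuclideanSpace.basisFun (Fin 2) ℝ).toBasis.det basisVec = 2 * √3 := by
  rw [Basis.det_apply, Matrix.det_fin_two]
  simp [basisVec, Basis.toMatrix_apply]

noncomputable def basis : Basis (Fin 2) ℝ (EuclideanSpace ℝ (Fin 2)) :=
  basisOfLinearIndependentOfCardEqFinrank
    ((Basis.is_basis_iff_det _).mpr (by rw [det_basisVec, isUnit_iff_ne_zero]; positivity)).1
    (by simp)

theorem coe_basis : ⇑basis = basisVec :=
  coe_basisOfLinearIndependentOfCardEqFinrank _ _

theorem mem_span_basis {v : EuclideanSpace ℝ (Fin 2)} :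
    v ∈ span ℤ (Set.range basis) ↔ ∃ a c : ℤ, a • basisVec 0 + c • basisVec 1 = v := by
  rw [coe_basis, basisVec, Matrix.range_cons_cons_empty, mem_span_pair]
  rfl

theorem eq_span_basis : HexLattice = span ℤ (Set.range basis) := by
  ext v
  rw [SetLike.mem_coe, mem_span_basis]
  refine exists₂_congr fun a c => ?_
  rw [eq_comm, ← (WithLp.ofLp_injective 2).eq_iff, funext_iff, funext_iff, Fin.forall_fin_two,
    Fin.forall_fin_two]
  simp only [basisVec, ← Int.cast_smul_eq_zsmul ℝ, Fin.isValue, Matrix.cons_val_zero,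
    Matrix.cons_val_one, Matrix.cons_val_fin_one, PiLp.add_apply, PiLp.smul_apply, smul_eq_mul,
    mul_one, mul_zero, zero_add, one_div]
  constructor <;> rintro ⟨h0, h1⟩ <;> constructor <;> linarith

theorem norm_sq_zsmul_add_zsmul (a c : ℤ) :
    ‖a • basisVec 0 + c • basisVec 1‖ ^ 2 = 4 * ((a : ℝ) ^ 2 + a * c + c ^ 2) := by
  rw [EuclideanSpace.norm_sq_eq, Fin.sum_univ_two]
  simp only [basisVec, ← Int.cast_smul_eq_zsmul ℝ, Fin.isValue, Matrix.cons_val_zero,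
    Matrix.cons_val_one, Matrix.cons_val_fin_one, PiLp.add_apply, PiLp.smul_apply, smul_eq_mul,
    mul_one, mul_zero, zero_add, norm_eq_abs, sq_abs, norm_mul, mul_pow, Nat.ofNat_nonneg, sq_sqrt]
  ring

theorem two_le_norm_of_mem_span {v : EuclideanSpace ℝ (Fin 2)}
    (hv : v ∈ span ℤ (Set.range basis)) (h0 : v ≠ 0) : 2 ≤ ‖v‖ := by
  obtain ⟨a, c, rfl⟩ := mem_span_basis.mp hv
  have hac : a ≠ 0 ∨ c ≠ 0 := by
    contrapose! h0
    simp [h0.1, h0.2]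
  have hform : (1 : ℝ) ≤ a ^ 2 + a * c + c ^ 2 := by
    exact_mod_cast Int.one_le_sq_add_mul_add_sq hac
  rw [← pow_le_pow_iff_left₀ zero_le_two (norm_nonneg _) two_ne_zero, norm_sq_zsmul_add_zsmul]
  linarith

theorem covolume_span_basis : ZLattice.covolume (span ℤ (Set.range basis)) = √12 := by
  rw [ZLattice.covolume_span_eq_abs_det basis (EuclideanSpace.basisFun (Fin 2) ℝ), coe_basis,
    det_basisVec, abs_of_pos (by positivity), show (12 : ℝ) = 2 ^ 2 * 3 by norm_num,
    Real.sqrt_mul (by positivity), Real.sqrt_sq zero_le_two]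

end HexLattice

theorem hex_density :
    Tendsto
      (fun r : ℝ =>
        volume (⋃ v ∈ HexLattice ∩ closedBall 0 r, ball v 1) /
          volume (closedBall (0 : EuclideanSpace ℝ (Fin 2)) r))
      atTop (nhds (ENNReal.ofReal (π / Real.sqrt 12))) := by
  have hsep : ∀ v ∈ span ℤ (Set.range HexLattice.basis), v ≠ 0 → 2 * 1 ≤ ‖v‖ := by
    simpa only [mul_one] using fun v => HexLattice.two_le_norm_of_mem_span
  have hunit : volume.real (ball (0 : EuclideanSpace ℝ (Fin 2)) 1) = π := by
    simp [measureReal_def, pi_nonneg]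
  rw [HexLattice.eq_span_basis]
  convert ZLattice.tendsto_packing_density _ hsep using 3
  rw [hunit, HexLattice.covolume_span_basis]
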